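/- Let σ be an a-state and a a sensing action executable in σ, and let S_a = Sens_a∖(σ.T∪σ.F); assume S_a ≠ ∅. Then: (1) Φ(a,σ) = {σ_1,…,σ_m} consists of exactly m = 2^{|S_a|} a-states; (2) a is strongly applicable in Δ = {δ_1,…,δ_m} where δ_i is the p-state [σ_i.T, σ_i.F] for i = 1,…,m; and (3) Regress(a,Δ) = [σ.T, σ.F]. -/
import Mathlib


open scoped Classical

/-! ## States -/

/-- A state: a pair of finite sets of fluents (true ones and false ones).
Used for both a-states (when the two sets are disjoint, see `St.OK`) and
p-states (partial states). -/
structure St (V : Type*) where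
  T : Finset V
  F : Finset V
deriving DecidableEq

variable {V : Type*} [DecidableEq V]

/-- A pair of sets of fluents is a genuine (a- or p-) state when the sets are disjoint. -/
def St.OK (s : St V) : Prop := Disjoint s.T s.F

/-- The extension set `ext(δ)` of a p-state `δ`: all a-states extending it. -/
def exts (δ : St V) : Set (St V) := {σ | σ.OK ∧ δ.T ⊆ σ.T ∧ δ.F ⊆ σ.F}

/-- `δ'` is a partial extension of `δ`. -/
def pext (δ δ' : St V) : Prop := δ.T ⊆ δ'.T ∧ δ.F ⊆ δ'.F

/-! ## Actions -/

/-- A non-sensing action: precondition literals (positive part `preP`, negative part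
`preN`), and disjoint add and delete lists. -/
structure NAct (V : Type*) where
  preP : Finset V
  preN : Finset V
  add : Finset V
  del : Finset V
  hdisj : Disjoint add del

/-- A sensing action: precondition literals and a set of sensed fluents not occurring
in the precondition. -/
structure SAct (V : Type*) where
  preP : Finset V
  preN : Finset V
  sens : Finset V
  hsens : Disjoint sens (preP ∪ preN)

/-- Executability of a non-sensing action in an a-state. -/
def NAct.execIn (a : NAct V) (σ : St V) : Prop := a.preP ⊆ σ.T ∧ a.preN ⊆ σ.F

/-- Executability of a sensing action in an a-state. -/
def SAct.execIn (a : SAct V) (σ : St V) : Prop := a.preP ⊆ σ.T ∧ a.preN ⊆ σ.F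

/-- The result of executing a non-sensing action `a` in an a-state `σ`. -/
def NAct.res (a : NAct V) (σ : St V) : St V :=
  ⟨σ.T \ a.del ∪ a.add, σ.F \ a.add ∪ a.del⟩

/-- The transition function `Φ` for a non-sensing action (`none` plays the role of `⊥`). -/
def PhiN (a : NAct V) (σ : St V) : Set (Option (St V)) :=
  {x | (a.execIn σ ∧ x = some (a.res σ)) ∨ (¬ a.execIn σ ∧ x = none)}

/-- The possible results of executing a sensing action `a` in an a-state `σ`. -/
def sres (a : SAct V) (σ : St V) : Set (St V) :=
  {σ' | σ'.OK ∧ σ.T ⊆ σ'.T ∧ σ.F ⊆ σ'.F ∧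
    (σ'.T \ σ.T) ∪ (σ'.F \ σ.F) = a.sens \ (σ.T ∪ σ.F)}

/-- The transition function `Φ` for a sensing action (`none` plays the role of `⊥`). -/
def PhiS (a : SAct V) (σ : St V) : Set (Option (St V)) :=
  {x | (a.execIn σ ∧ ∃ σ' ∈ sres a σ, x = some σ') ∨ (¬ a.execIn σ ∧ x = none)}

/-! ## Regression for single actions -/

/-- Applicability of a non-sensing action `a` in a p-state `δ`. -/
def AppN (a : NAct V) (δ : St V) : Prop :=
  ((a.add ∩ δ.T).Nonempty ∨ (a.del ∩ δ.F).Nonempty) ∧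
  Disjoint a.add δ.F ∧ Disjoint a.del δ.T ∧
  a.preP ∩ δ.F ⊆ a.del ∧ a.preN ∩ δ.T ⊆ a.add

/-- Regression of a non-sensing action over a p-state (`none` is `⊥`). -/
noncomputable def RegressN (a : NAct V) (δ : St V) : Option (St V) :=
  if AppN a δ then some ⟨δ.T \ a.add ∪ a.preP, δ.F \ a.del ∪ a.preN⟩ else none

/-- `X` is a sensed set of the set `Δ` of (distinct) p-states with respect to the sensing
action `a`, i.e. `X` is a nonempty subset of `Sens_a` and `Δ` is proper with respect to `X`. -/
def SensedSet (a : SAct V) (Δ : Finset (St V)) (X : Finset V) : Prop :=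
  X.Nonempty ∧ X ⊆ a.sens ∧
  (∀ δ ∈ Δ, a.sens ⊆ δ.T ∪ δ.F) ∧
  Δ.card = 2 ^ X.card ∧
  (∀ P Q : Finset V, Disjoint P Q → P ∪ Q = X →
    ∃! δ, δ ∈ Δ ∧ δ.T ∩ X = P ∧ δ.F ∩ X = Q) ∧
  (∀ δ ∈ Δ, ∀ δ' ∈ Δ, δ ≠ δ' → δ.T \ X = δ'.T \ X ∧ δ.F \ X = δ'.F \ X)

/-- Strong applicability of a sensing action in a set of p-states. -/
def StrongApp (a : SAct V) (Δ : Finset (St V)) : Prop :=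
  (∃ X, SensedSet a Δ X) ∧ ∀ δ ∈ Δ, Disjoint a.preP δ.F ∧ Disjoint a.preN δ.T

/-- Applicability of a sensing action in a set of p-states: some family of partial
extensions of the members of `Δ` makes `a` strongly applicable, and `Sens_a` is known
in every member of `Δ`. -/
def AppS (a : SAct V) (Δ : Finset (St V)) : Prop :=
  (∃ e : St V → St V, (∀ δ ∈ Δ, pext δ (e δ)) ∧ Set.InjOn e ↑Δ ∧ StrongApp a (Δ.image e)) ∧
  (∀ δ ∈ Δ, a.sens ⊆ δ.T ∪ δ.F)

/-- `S_{a,Δ}`: the sensed set of a family of partial extensions of `Δ`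
(well-defined by the "unique sensed set" lemma). -/
noncomputable def SaD (a : SAct V) (Δ : Finset (St V)) : Finset V :=
  if h : ∃ X, ∃ e : St V → St V, (∀ δ ∈ Δ, pext δ (e δ)) ∧ Set.InjOn e ↑Δ ∧
      SensedSet a (Δ.image e) X
  then h.choose else ∅

/-- Regression of a sensing action over a set of p-states (`none` is `⊥`). -/
noncomputable def RegressS (a : SAct V) (Δ : Finset (St V)) : Option (St V) :=
  if AppS a Δ then
    some ⟨(Δ.sup St.T) \ SaD a Δ ∪ a.preP, (Δ.sup St.F) \ SaD a Δ ∪ a.preN⟩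
  else none

/-! ## Formulas (conjunctions of fluent literals) -/

/-- A conjunction of fluent literals, given by its positive and negative fluents. -/
abbrev Form (V : Type*) := Finset V × Finset V

/-- A conjunction of literals is consistent if no fluent occurs both positively and
negatively. -/
def Consistent (φ : Form V) : Prop := Disjoint φ.1 φ.2

/-- Two conjunctions of literals are mutually exclusive. -/
def MutEx (φ ψ : Form V) : Prop := ¬ Disjoint φ.1 ψ.2 ∨ ¬ Disjoint ψ.1 φ.2

/-- A conjunction of literals holds in an a-state. -/
def holds (φ : Form V) (σ : St V) : Prop := φ.1 ⊆ σ.T ∧ φ.2 ⊆ σ.F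

/-- `BIN S`: all binary representations of the nonempty set of fluents `S`. -/
def BIN (S : Finset V) : Finset (Form V) :=
  S.powerset.image (fun P => (P, S \ P))

/-- The set of conjunctions `χ` spans over the set of fluents `S`. -/
def spans (χ : Finset (Form V)) (S : Finset V) : Prop :=
  ∃ φ : Form V, Consistent φ ∧ φ ∉ χ ∧ Disjoint S (φ.1 ∪ φ.2) ∧
    χ = (BIN S).image (fun ψ => (φ.1 ∪ ψ.1, φ.2 ∪ ψ.2))

/-! ## Conditional plans -/

/-- Conditional plans. -/
inductive Plan (V : Type*) where
  | empty : Plan V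
  | action : NAct V → Plan V
  | pcase : SAct V → List (Form V × Plan V) → Plan V
  | seq : Plan V → Plan V → Plan V

/-- Well-formedness of a conditional plan: in every case plan the guards are
consistent and pairwise mutually exclusive conjunctions of literals. -/
inductive Plan.WF : Plan V → Prop
  | empty : Plan.WF .empty
  | action (a : NAct V) : Plan.WF (.action a)
  | pcase (a : SAct V) (bs : List (Form V × Plan V)) :
      (∀ b ∈ bs, Consistent b.1) →
      bs.Pairwise (fun b b' => MutEx b.1 b'.1) →
      (∀ b ∈ bs, Plan.WF b.2) → Plan.WF (.pcase a bs)
  | seq {c₁ c₂ : Plan V} : Plan.WF c₁ → Plan.WF c₂ → Plan.WF (.seq c₁ c₂)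

/-- The graph of the extended transition function `Φ*`:
`PhiStarR c x y` means `y ∈ Φ*(c, x)` (where `none` is `⊥`). -/
inductive PhiStarR : Plan V → Option (St V) → Option (St V) → Prop
  | bot (c : Plan V) : PhiStarR c none none
  | empty (σ : St V) : PhiStarR .empty (some σ) (some σ)
  | action (a : NAct V) (σ : St V) (x : Option (St V)) :
      x ∈ PhiN a σ → PhiStarR (.action a) (some σ) x
  | caseBot (a : SAct V) (bs : List (Form V × Plan V)) (σ : St V) :
      none ∈ PhiS a σ → PhiStarR (.pcase a bs) (some σ) none
  | caseHit (a : SAct V) (bs : List (Form V × Plan V)) (σ σ' : St V)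
      (φ : Form V) (p : Plan V) (x : Option (St V)) :
      some σ' ∈ PhiS a σ → (φ, p) ∈ bs → holds φ σ' →
      PhiStarR p (some σ') x → PhiStarR (.pcase a bs) (some σ) x
  | caseMiss (a : SAct V) (bs : List (Form V × Plan V)) (σ σ' : St V) :
      some σ' ∈ PhiS a σ → (∀ b ∈ bs, ¬ holds b.1 σ') →
      PhiStarR (.pcase a bs) (some σ) none
  | seq (c₁ c₂ : Plan V) (σ : St V) (y x : Option (St V)) :
      PhiStarR c₁ (some σ) y → PhiStarR c₂ y x → PhiStarR (.seq c₁ c₂) (some σ) x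

/-- `R(cᵢ,δ)` from the definition of `Regress*` on case plans (the consistent case). -/
def Rform (φ : Form V) (st : St V) : St V := ⟨st.T ∪ φ.1, st.F ∪ φ.2⟩

/-- The graph of the extended regression function `Regress*`:
`RegStarR c x y` means `Regress*(c, x) = y` (where `none` is `⊥`). -/
inductive RegStarR : Plan V → Option (St V) → Option (St V) → Prop
  | bot (c : Plan V) : RegStarR c none none
  | empty (δ : St V) : RegStarR .empty (some δ) (some δ)
  | action (a : NAct V) (δ : St V) : RegStarR (.action a) (some δ) (RegressN a δ)
  | caseBot (a : SAct V) (bs : List (Form V × Plan V)) (δ : St V)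
      (b : Form V × Plan V) :
      b ∈ bs → RegStarR b.2 (some δ) none → RegStarR (.pcase a bs) (some δ) none
  | caseRBot (a : SAct V) (bs : List (Form V × Plan V)) (δ : St V)
      (b : Form V × Plan V) (st : St V) :
      b ∈ bs → RegStarR b.2 (some δ) (some st) →
      ¬ (Disjoint b.1.1 st.F ∧ Disjoint b.1.2 st.T) →
      RegStarR (.pcase a bs) (some δ) none
  | caseGo (a : SAct V) (bs : List (Form V × Plan V)) (δ : St V)
      (r : Form V × Plan V → St V) :
      (∀ b ∈ bs, RegStarR b.2 (some δ) (some (r b))) →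
      (∀ b ∈ bs, Disjoint b.1.1 (r b).F ∧ Disjoint b.1.2 (r b).T) →
      RegStarR (.pcase a bs) (some δ)
        (RegressS a ((bs.map (fun b => Rform b.1 (r b))).toFinset))
  | seq (c₁ c₂ : Plan V) (δ : St V) (y x : Option (St V)) :
      RegStarR c₂ (some δ) y → RegStarR c₁ y x → RegStarR (.seq c₁ c₂) (some δ) x

/-! ## Subplans, redundancy, regressability -/

/-- One editing step producing a "smaller" plan: removing an instance of a
non-sensing action, removing a case plan or one of its branches, or replacing a
sensing action by a sub sensing action; possibly deep inside the plan. -/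
inductive Edit : Plan V → Plan V → Prop
  | dropAct (a : NAct V) : Edit (.action a) .empty
  | dropCase (a : SAct V) (bs : List (Form V × Plan V)) : Edit (.pcase a bs) .empty
  | dropBranch (a : SAct V) (b : Form V × Plan V) (l₁ l₂ : List (Form V × Plan V)) :
      Edit (.pcase a (l₁ ++ b :: l₂)) (.pcase a (l₁ ++ l₂))
  | subSense (a a' : SAct V) (bs : List (Form V × Plan V)) :
      a'.preP = a.preP → a'.preN = a.preN → a'.sens ⊂ a.sens →
      Edit (.pcase a bs) (.pcase a' bs)
  | inBranch (a : SAct V) (φ : Form V) (p p' : Plan V) (l₁ l₂ : List (Form V × Plan V)) :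
      Edit p p' →
      Edit (.pcase a (l₁ ++ (φ, p) :: l₂)) (.pcase a (l₁ ++ (φ, p') :: l₂))
  | seqL {c₁ c₁' : Plan V} (c₂ : Plan V) : Edit c₁ c₁' → Edit (.seq c₁ c₂) (.seq c₁' c₂)
  | seqR {c₂ c₂' : Plan V} (c₁ : Plan V) : Edit c₂ c₂' → Edit (.seq c₁ c₂) (.seq c₁ c₂')

/-- `c'` is a subplan of `c`. -/
def IsSubplan (c' c : Plan V) : Prop := Relation.TransGen Edit c c'

/-- `⊥ ∉ Φ*(c,σ)` and `Φ*(c,σ) ⊆ ext(δ)`. -/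
def Achieves (c : Plan V) (σ δ : St V) : Prop :=
  ∀ x, PhiStarR c (some σ) x → ∃ σ' ∈ exts δ, x = some σ'

/-- `c` is redundant with respect to `(σ,δ)`. -/
def Redundant (c : Plan V) (σ δ : St V) : Prop :=
  Achieves c σ δ ∧ ∃ c', IsSubplan c' c ∧ Achieves c' σ δ

/-- A case plan `a;case(φ₁→c₁,…,φₙ→cₙ)` is possibly regressable. -/
def PRCase (a : SAct V) (bs : List (Form V × Plan V)) : Prop :=
  (∃ S : Finset V, S.Nonempty ∧ S ⊆ a.sens ∧ spans (bs.map Prod.fst).toFinset S) ∧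
  ∀ b ∈ bs, a.sens ⊆ b.1.1 ∪ b.1.2

/-- Every case plan occurring in `c` is possibly regressable. -/
inductive AllCasesPR : Plan V → Prop
  | empty : AllCasesPR .empty
  | action (a : NAct V) : AllCasesPR (.action a)
  | pcase (a : SAct V) (bs : List (Form V × Plan V)) :
      PRCase a bs → (∀ b ∈ bs, AllCasesPR b.2) → AllCasesPR (.pcase a bs)
  | seq {c₁ c₂ : Plan V} : AllCasesPR c₁ → AllCasesPR c₂ → AllCasesPR (.seq c₁ c₂)

/-- `c` is regressable with respect to `(σ,δ)`. -/
def Regressable (c : Plan V) (σ δ : St V) : Prop :=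
  AllCasesPR c ∧ Achieves c σ δ ∧ ¬ Redundant c σ δ

/-! ## Normalized plans -/

/-- Normalized conditional plans: a sequence of non-sensing actions followed by
either nothing or a case plan all of whose branches are normalized. -/
inductive Normalized : Plan V → Prop
  | empty : Normalized .empty
  | single (a : NAct V) : Normalized (.action a)
  | pcase (a : SAct V) (bs : List (Form V × Plan V)) :
      (∀ b ∈ bs, Normalized b.2) → Normalized (.pcase a bs)
  | cons (a : NAct V) {c : Plan V} : Normalized c → Normalized (.seq (.action a) c)

/-- `normSeq c k` normalizes the plan `c ; k`, assuming `k` is already normalized. -/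
def normSeq : Plan V → Plan V → Plan V
  | .empty, k => k
  | .action a, k => .seq (.action a) k
  | .pcase a bs, k => .pcase a (bs.attach.map (fun b => (b.1.1, normSeq b.1.2 k)))
  | .seq c₁ c₂, k => normSeq c₁ (normSeq c₂ k)
termination_by c _ => sizeOf c
decreasing_by
  all_goals simp_wf
  all_goals first
    | omega
    | (have h := List.sizeOf_lt_of_mem b.2
       obtain ⟨⟨f, p⟩, hb⟩ := b
       simp at *
       omega)

/-- `normalized(c)`. -/
def normalizePlan (c : Plan V) : Plan V := normSeq c .empty

/-! ## Sequences of non-sensing actions -/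

/-- The conditional plan `a₁;…;aₙ;k` determined by a list of non-sensing actions. -/
def seqP : List (NAct V) → Plan V → Plan V
  | [], k => k
  | a :: t, k => .seq (.action a) (seqP t k)

instance (a : NAct V) (σ : St V) : Decidable (a.execIn σ) :=
  inferInstanceAs (Decidable (a.preP ⊆ σ.T ∧ a.preN ⊆ σ.F))

/-- `Φ*` specialized to a sequence of non-sensing actions, as a function
(`none` is `⊥`). -/
def runSeq : List (NAct V) → St V → Option (St V)
  | [], σ => some σ
  | a :: t, σ => if a.execIn σ then runSeq t (a.res σ) else none

/-- `Regress*` specialized to a sequence of non-sensing actions, as a function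
(`none` is `⊥`). -/
noncomputable def regSeq : List (NAct V) → St V → Option (St V)
  | [], δ => some δ
  | a :: t, δ => match regSeq t δ with
      | none => none
      | some δ' => RegressN a δ'

/-- For a sequence of non-sensing actions: `⊥ ∉ Φ*(l,σ)` and `Φ*(l,σ) ⊆ ext(δ)`. -/
def SeqAchieves (l : List (NAct V)) (σ δ : St V) : Prop :=
  ∃ σ', runSeq l σ = some σ' ∧ σ' ∈ exts δ

/-- Redundancy of a sequence of non-sensing actions with respect to `(σ,δ)`
(a subplan of a sequence is a proper sublist of it). -/
def SeqRedundant (l : List (NAct V)) (σ δ : St V) : Prop :=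
  SeqAchieves l σ δ ∧ ∃ l', List.Sublist l' l ∧ l' ≠ l ∧ SeqAchieves l' σ δ

/-- Regressability of a sequence of non-sensing actions with respect to `(σ,δ)`. -/
def SeqRegressable (l : List (NAct V)) (σ δ : St V) : Prop :=
  SeqAchieves l σ δ ∧ ¬ SeqRedundant l σ δ

/-! ## The regression search algorithm -/

/-- The sets of plan-state pairs reachable by the algorithm `Solve(P)` from the
initial set `{⟨[], δ_G⟩}` using steps 4.1 (non-sensing regression) and 4.2
(sensing regression). -/
inductive Reach (δG : St V) : Set (Plan V × St V) → Prop
  | init : Reach δG {(Plan.empty, δG)}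
  | step1 {N : Set (Plan V × St V)} (c : Plan V) (δ : St V) (a : NAct V) (δ' : St V) :
      Reach δG N → (c, δ) ∈ N → RegressN a δ = some δ' →
      (∀ p ∈ N, p.2 ≠ δ') →
      Reach δG (insert (Plan.seq (.action a) c, δ') N)
  | step2 {N : Set (Plan V × St V)} (a : SAct V) (bs : List (Form V × Plan V))
      (ds : Form V × Plan V → St V) (S : Finset V) (δ' : St V) :
      Reach δG N →
      (∀ b ∈ bs, (b.2, ds b) ∈ N) →
      S.Nonempty → S ⊆ a.sens → spans (bs.map Prod.fst).toFinset S →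
      (∀ b ∈ bs, (Rform b.1 (ds b)).OK) →
      RegressS a ((bs.map (fun b => Rform b.1 (ds b))).toFinset) = some δ' →
      (∀ p ∈ N, p.2 ≠ δ') →
      Reach δG (insert (Plan.pcase a bs, δ') N)

/-- `N` is saturated: no step of type 4.1 or 4.2 can produce a p-state not
already occurring in `N`. -/
def Saturated (N : Set (Plan V × St V)) : Prop :=
  (∀ (c : Plan V) (δ : St V) (a : NAct V) (δ' : St V),
      (c, δ) ∈ N → RegressN a δ = some δ' → ∃ p ∈ N, p.2 = δ') ∧
  (∀ (a : SAct V) (bs : List (Form V × Plan V)) (ds : Form V × Plan V → St V)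
      (S : Finset V) (δ' : St V),
      (∀ b ∈ bs, (b.2, ds b) ∈ N) →
      S.Nonempty → S ⊆ a.sens → spans (bs.map Prod.fst).toFinset S →
      (∀ b ∈ bs, (Rform b.1 (ds b)).OK) →
      RegressS a ((bs.map (fun b => Rform b.1 (ds b))).toFinset) = some δ' →
      ∃ p ∈ N, p.2 = δ')

namespace SPR17

variable {V : Type*} [DecidableEq V]

lemma St.ext2 {s t : St V} (hT : s.T = t.T) (hF : s.F = t.F) : s = t := by
  cases s; cases t; simp_all

/-- The a-state determined by a subset `P` of the unknown sensed fluents. -/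
def fPa (σ : St V) (a : SAct V) (P : Finset V) : St V :=
  ⟨σ.T ∪ P, σ.F ∪ ((a.sens \ (σ.T ∪ σ.F)) \ P)⟩

lemma mem_sres_iff (σ : St V) (hσ : σ.OK) (a : SAct V) (σ' : St V) :
    σ' ∈ sres a σ ↔ ∃ P ⊆ a.sens \ (σ.T ∪ σ.F), σ' = fPa σ a P := by
  constructor
  · rintro ⟨hOK, hT, hF, hU⟩
    refine ⟨σ'.T \ σ.T, ?_, ?_⟩
    · intro x hx
      have : x ∈ (σ'.T \ σ.T) ∪ (σ'.F \ σ.F) := Finset.mem_union_left _ hx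
      rwa [hU] at this
    · refine St.ext2 ?_ ?_
      · exact (Finset.union_sdiff_of_subset hT).symm
      · show σ'.F = σ.F ∪ ((a.sens \ (σ.T ∪ σ.F)) \ (σ'.T \ σ.T))
        ext x
        have hU' := Finset.ext_iff.mp hU x
        have hd : x ∈ σ'.T → x ∉ σ'.F := fun h => Finset.disjoint_left.mp hOK h
        have hT' := fun h => hT (show x ∈ σ.T from h)
        have hF' := fun h => hF (show x ∈ σ.F from h)
        simp only [Finset.mem_union, Finset.mem_sdiff] at hU' ⊢
        tauto
  · rintro ⟨P, hP, rfl⟩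
    have hPx := fun x (h : x ∈ P) => Finset.mem_sdiff.mp (hP h)
    simp only [Finset.mem_union, not_or] at hPx
    have hσd := fun x h h' => Finset.disjoint_left.mp hσ (show x ∈ σ.T from h) h'
    refine ⟨?_, Finset.subset_union_left, Finset.subset_union_left, ?_⟩
    · rw [St.OK, Finset.disjoint_left]
      intro x hx hx'
      simp only [fPa, Finset.mem_union, Finset.mem_sdiff] at hx hx'
      have := hPx x; have := hσd x; tauto
    · ext x
      simp only [fPa, Finset.mem_union, Finset.mem_sdiff]
      have := hPx x; have := hσd x; tauto

/-- The finset of possible sensing results. -/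
def sresFin (σ : St V) (a : SAct V) : Finset (St V) :=
  (a.sens \ (σ.T ∪ σ.F)).powerset.image (fPa σ a)

lemma mem_sresFin {σ : St V} {a : SAct V} {δ : St V} :
    δ ∈ sresFin σ a ↔ ∃ P ⊆ a.sens \ (σ.T ∪ σ.F), δ = fPa σ a P := by
  simp only [sresFin, Finset.mem_image, Finset.mem_powerset]
  constructor
  · rintro ⟨P, h1, rfl⟩; exact ⟨P, h1, rfl⟩
  · rintro ⟨P, h1, rfl⟩; exact ⟨P, h1, rfl⟩

lemma coe_sresFin (σ : St V) (hσ : σ.OK) (a : SAct V) :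
    ↑(sresFin σ a) = sres a σ := by
  ext δ
  rw [Finset.mem_coe, mem_sresFin, mem_sres_iff σ hσ a]

lemma fPa_T_inter {σ : St V} {a : SAct V} {P : Finset V}
    (hP : P ⊆ a.sens \ (σ.T ∪ σ.F)) :
    (fPa σ a P).T ∩ (a.sens \ (σ.T ∪ σ.F)) = P := by
  ext x
  have hPx := fun (h : x ∈ P) => Finset.mem_sdiff.mp (hP h)
  simp only [fPa, Finset.mem_inter, Finset.mem_union, Finset.mem_sdiff, not_or] at hPx ⊢
  tauto

lemma fPa_F_inter {σ : St V} {a : SAct V} (P : Finset V) :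
    (fPa σ a P).F ∩ (a.sens \ (σ.T ∪ σ.F)) = (a.sens \ (σ.T ∪ σ.F)) \ P := by
  ext x
  simp only [fPa, Finset.mem_inter, Finset.mem_union, Finset.mem_sdiff, not_or] at *
  tauto

lemma fPa_T_sdiff {σ : St V} {a : SAct V} {P : Finset V}
    (hP : P ⊆ a.sens \ (σ.T ∪ σ.F)) :
    (fPa σ a P).T \ (a.sens \ (σ.T ∪ σ.F)) = σ.T := by
  ext x
  have hPx := fun (h : x ∈ P) => Finset.mem_sdiff.mp (hP h)
  simp only [fPa, Finset.mem_union, Finset.mem_sdiff, not_or, not_and, not_not] at hPx ⊢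
  tauto

lemma fPa_F_sdiff {σ : St V} {a : SAct V} (P : Finset V) :
    (fPa σ a P).F \ (a.sens \ (σ.T ∪ σ.F)) = σ.F := by
  ext x
  simp only [fPa, Finset.mem_union, Finset.mem_sdiff, not_or, not_and, not_not] at *
  tauto

lemma fPa_inj {σ : St V} {a : SAct V} {P Q : Finset V}
    (hP : P ⊆ a.sens \ (σ.T ∪ σ.F)) (hQ : Q ⊆ a.sens \ (σ.T ∪ σ.F))
    (h : fPa σ a P = fPa σ a Q) : P = Q := by
  have : (fPa σ a P).T ∩ (a.sens \ (σ.T ∪ σ.F)) = (fPa σ a Q).T ∩ (a.sens \ (σ.T ∪ σ.F)) := by rw [h]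
  rwa [fPa_T_inter hP, fPa_T_inter hQ] at this

lemma card_sresFin (σ : St V) (a : SAct V) :
    (sresFin σ a).card = 2 ^ (a.sens \ (σ.T ∪ σ.F)).card := by
  rw [sresFin, Finset.card_image_of_injOn, Finset.card_powerset]
  intro P hP Q hQ h
  exact fPa_inj (Finset.mem_powerset.mp hP) (Finset.mem_powerset.mp hQ) h

lemma sens_subset_fPa (σ : St V) (a : SAct V) (P : Finset V) :
    a.sens ⊆ (fPa σ a P).T ∪ (fPa σ a P).F := by
  intro x hx
  simp only [fPa, Finset.mem_union, Finset.mem_sdiff, not_or]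
  by_cases h1 : x ∈ σ.T
  · tauto
  by_cases h2 : x ∈ σ.F
  · tauto
  by_cases h3 : x ∈ P
  · tauto
  · tauto

lemma sensed_eq (σ : St V) (hσ : σ.OK) (a : SAct V)
    (X : Finset V) (e : St V → St V)
    (hpext : ∀ δ ∈ sresFin σ a, pext δ (e δ))
    (hinj : Set.InjOn e ↑(sresFin σ a))
    (hSS : SensedSet a ((sresFin σ a).image e) X) :
    X = a.sens \ (σ.T ∪ σ.F) := by
  obtain ⟨hXne, hXsens, hknown, hcard, hpart, hdiff⟩ := hSS
  have hc1 : ((sresFin σ a).image e).card = (sresFin σ a).card :=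
    Finset.card_image_of_injOn hinj
  have hc2 : (2:ℕ) ^ X.card = 2 ^ (a.sens \ (σ.T ∪ σ.F)).card := by
    rw [← hcard, hc1, card_sresFin]
  have hcardeq : X.card = (a.sens \ (σ.T ∪ σ.F)).card :=
    Nat.pow_right_injective (le_refl 2) hc2
  have hsub : X ⊆ a.sens \ (σ.T ∪ σ.F) := by
    intro x hx
    by_contra hxS
    have hxsens : x ∈ a.sens := hXsens hx
    have hxTF : x ∈ σ.T ∪ σ.F := by
      by_contra h; exact hxS (Finset.mem_sdiff.mpr ⟨hxsens, h⟩)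
    have huni1 : (X \ {x}) ∪ {x} = X := by
      ext y
      simp only [Finset.mem_union, Finset.mem_sdiff, Finset.mem_singleton]
      constructor
      · rintro (⟨h, -⟩ | h)
        · exact h
        · exact h ▸ hx
      · intro h
        by_cases hy : y = x
        · exact Or.inr hy
        · exact Or.inl ⟨h, hy⟩
    have huni2 : {x} ∪ (X \ {x}) = X := by rw [Finset.union_comm]; exact huni1
    rcases Finset.mem_union.mp hxTF with hT | hF
    · obtain ⟨δ', ⟨hδ'mem, hT', hF'⟩, -⟩ :=
        hpart (X \ {x}) {x} Finset.sdiff_disjoint huni1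
      obtain ⟨δ, hδ, rfl⟩ := Finset.mem_image.mp hδ'mem
      obtain ⟨P, hP, rfl⟩ := mem_sresFin.mp hδ
      have hxT : x ∈ (e (fPa σ a P)).T :=
        (hpext _ hδ).1 (Finset.mem_union_left _ hT)
      have : x ∈ X \ {x} := hT' ▸ Finset.mem_inter.mpr ⟨hxT, hx⟩
      simp at this
    · obtain ⟨δ', ⟨hδ'mem, hT', hF'⟩, -⟩ :=
        hpart {x} (X \ {x}) Finset.sdiff_disjoint.symm huni2
      obtain ⟨δ, hδ, rfl⟩ := Finset.mem_image.mp hδ'mem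
      obtain ⟨P, hP, rfl⟩ := mem_sresFin.mp hδ
      have hxF : x ∈ (e (fPa σ a P)).F :=
        (hpext _ hδ).2 (Finset.mem_union_left _ hF)
      have : x ∈ X \ {x} := hF' ▸ Finset.mem_inter.mpr ⟨hxF, hx⟩
      simp at this
  exact Finset.eq_of_subset_of_card_le hsub (le_of_eq hcardeq.symm)

end SPR17

/-- for a sensing action `a` executable in `σ` with
`S_a = Sens_a ∖ (σ.T ∪ σ.F) ≠ ∅`: `Φ(a,σ)` consists of exactly `2^|S_a|`
a-states; `a` is strongly applicable in the corresponding set of p-states `Δ`;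
and `Regress(a,Δ) = [σ.T,σ.F]`. -/
theorem sensing_progress_regress
    (σ : St V) (hσ : σ.OK) (a : SAct V) (hex : a.execIn σ)
    (hne : (a.sens \ (σ.T ∪ σ.F)).Nonempty) :
    (PhiS a σ = some '' sres a σ ∧ (sres a σ).Finite ∧
      (sres a σ).ncard = 2 ^ (a.sens \ (σ.T ∪ σ.F)).card) ∧
    ∀ Δ : Finset (St V), ↑Δ = sres a σ →
      StrongApp a Δ ∧ RegressS a Δ = some σ := by
  set S := a.sens \ (σ.T ∪ σ.F) with hSdef
  have hSd : Disjoint S (σ.T ∪ σ.F) := Finset.sdiff_disjoint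
  have hST : Disjoint S σ.T := hSd.mono_right Finset.subset_union_left
  have hSF : Disjoint S σ.F := hSd.mono_right Finset.subset_union_right
  have hcoe : ↑(SPR17.sresFin σ a) = sres a σ := SPR17.coe_sresFin σ hσ a
  constructor
  · refine ⟨?_, ?_, ?_⟩
    · ext x
      simp only [PhiS, Set.mem_setOf_eq, Set.mem_image]
      constructor
      · rintro (⟨-, σ', h1, rfl⟩ | ⟨hne', -⟩)
        · exact ⟨σ', h1, rfl⟩
        · exact absurd hex hne'
      · rintro ⟨σ', h, rfl⟩
        exact Or.inl ⟨hex, σ', h, rfl⟩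
    · rw [← hcoe]; exact Finset.finite_toSet _
    · rw [← hcoe, Set.ncard_coe_finset, SPR17.card_sresFin]
  · intro Δ hΔ
    have hΔeq : Δ = SPR17.sresFin σ a := Finset.coe_injective (by rw [hcoe, hΔ])
    subst hΔeq
    have hmemP : ∀ P ⊆ S, SPR17.fPa σ a P ∈ SPR17.sresFin σ a :=
      fun P hP => SPR17.mem_sresFin.mpr ⟨P, hP, rfl⟩
    have hSS : SensedSet a (SPR17.sresFin σ a) S := by
      refine ⟨hne, Finset.sdiff_subset, ?_, SPR17.card_sresFin σ a, ?_, ?_⟩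
      · intro δ hδ
        obtain ⟨P, hP, rfl⟩ := SPR17.mem_sresFin.mp hδ
        exact SPR17.sens_subset_fPa σ a P
      · intro P Q hdisj huni
        have hPS : P ⊆ S := huni ▸ Finset.subset_union_left
        have hQ : Q = S \ P := by
          ext x
          have h1 := Finset.ext_iff.mp huni x
          have h2 : x ∈ P → x ∉ Q := fun h => Finset.disjoint_left.mp hdisj h
          simp only [Finset.mem_union, Finset.mem_sdiff] at h1 ⊢
          tauto
        refine ⟨SPR17.fPa σ a P,
          ⟨hmemP P hPS, SPR17.fPa_T_inter hPS, by rw [hQ]; exact SPR17.fPa_F_inter P⟩, ?_⟩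
        rintro δ ⟨hδ, hT, -⟩
        obtain ⟨P', hP', rfl⟩ := SPR17.mem_sresFin.mp hδ
        rw [SPR17.fPa_T_inter hP'] at hT
        rw [hT]
      · intro δ hδ δ' hδ' _
        obtain ⟨P, hP, rfl⟩ := SPR17.mem_sresFin.mp hδ
        obtain ⟨P', hP', rfl⟩ := SPR17.mem_sresFin.mp hδ'
        rw [SPR17.fPa_T_sdiff hP, SPR17.fPa_T_sdiff hP',
          SPR17.fPa_F_sdiff, SPR17.fPa_F_sdiff]
        exact ⟨rfl, rfl⟩
    have hpre : ∀ δ ∈ SPR17.sresFin σ a, Disjoint a.preP δ.F ∧ Disjoint a.preN δ.T := by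
      intro δ hδ
      obtain ⟨P, hP, rfl⟩ := SPR17.mem_sresFin.mp hδ
      have hsPN : ∀ x ∈ a.sens, ¬(x ∈ a.preP ∨ x ∈ a.preN) := by
        intro x hx
        have h := Finset.disjoint_left.mp a.hsens hx
        simpa only [Finset.mem_union] using h
      have hsP : ∀ x ∈ a.sens, x ∉ a.preP := fun x hx hxp => hsPN x hx (Or.inl hxp)
      have hsN : ∀ x ∈ a.sens, x ∉ a.preN := fun x hx hxp => hsPN x hx (Or.inr hxp)
      constructor
      · rw [Finset.disjoint_left]
        intro x hx hx'
        simp only [SPR17.fPa, Finset.mem_union, Finset.mem_sdiff, not_or] at hx'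
        have h1 : x ∈ σ.T := hex.1 hx
        have h2 : x ∉ σ.F := Finset.disjoint_left.mp hσ h1
        have h3 : x ∈ a.sens → False := fun h =>
          hsP x h hx
        tauto
      · rw [Finset.disjoint_left]
        intro x hx hx'
        simp only [SPR17.fPa, Finset.mem_union] at hx'
        have h1 : x ∈ σ.F := hex.2 hx
        have h2 : x ∉ σ.T := fun h => Finset.disjoint_left.mp hσ h h1
        have h3 : x ∈ a.sens → False := fun h =>
          hsN x h hx
        have h4 : x ∈ P → x ∈ a.sens := fun h => (Finset.mem_sdiff.mp (hP h)).1
        tauto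
    have hStrong : StrongApp a (SPR17.sresFin σ a) := ⟨⟨S, hSS⟩, hpre⟩
    have hknown : ∀ δ ∈ SPR17.sresFin σ a, a.sens ⊆ δ.T ∪ δ.F := hSS.2.2.1
    have hApp : AppS a (SPR17.sresFin σ a) := by
      refine ⟨⟨id, fun δ _ => ⟨subset_rfl, subset_rfl⟩, Set.injOn_id _, ?_⟩, hknown⟩
      rwa [Finset.image_id]
    have hEx : ∃ X, ∃ e : St V → St V, (∀ δ ∈ SPR17.sresFin σ a, pext δ (e δ)) ∧
        Set.InjOn e ↑(SPR17.sresFin σ a) ∧ SensedSet a ((SPR17.sresFin σ a).image e) X :=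
      ⟨S, id, fun δ _ => ⟨subset_rfl, subset_rfl⟩, Set.injOn_id _, by rwa [Finset.image_id]⟩
    have hSaD : SaD a (SPR17.sresFin σ a) = S := by
      rw [SaD, dif_pos hEx]
      obtain ⟨e, h1, h2, h3⟩ := hEx.choose_spec
      exact SPR17.sensed_eq σ hσ a _ e h1 h2 h3
    have hsupT : (SPR17.sresFin σ a).sup St.T = σ.T ∪ S := by
      apply le_antisymm
      · refine Finset.sup_le fun δ hδ => ?_
        obtain ⟨P, hP, rfl⟩ := SPR17.mem_sresFin.mp hδ
        exact Finset.union_subset_union subset_rfl hP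
      · exact Finset.le_sup (f := St.T) (hmemP S subset_rfl)
    have hsupF : (SPR17.sresFin σ a).sup St.F = σ.F ∪ S := by
      apply le_antisymm
      · refine Finset.sup_le fun δ hδ => ?_
        obtain ⟨P, hP, rfl⟩ := SPR17.mem_sresFin.mp hδ
        exact Finset.union_subset_union subset_rfl Finset.sdiff_subset
      · have h := Finset.le_sup (f := St.F) (hmemP ∅ (Finset.empty_subset _))
        simpa [SPR17.fPa, ← hSdef] using h
    refine ⟨hStrong, ?_⟩
    rw [RegressS, if_pos hApp, hSaD, hsupT, hsupF]
    have hT : (σ.T ∪ S) \ S ∪ a.preP = σ.T := by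
      rw [Finset.union_sdiff_right, Finset.sdiff_eq_self_of_disjoint hST.symm,
        Finset.union_eq_left.mpr hex.1]
    have hF : (σ.F ∪ S) \ S ∪ a.preN = σ.F := by
      rw [Finset.union_sdiff_right, Finset.sdiff_eq_self_of_disjoint hSF.symm,
        Finset.union_eq_left.mpr hex.2]
    exact congrArg some (SPR17.St.ext2 hT hF)
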